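/- arXiv:1304.6011 — 3 statements merged into one kernel-verified Lean document; each statement's English description precedes it below -/
import Mathlib

section
/- Suppose n is even and s ≥ 1. Then the quotient group 𝒟/𝒫 is isomorphic to (ℤ/nℤ)^{t+1} × (ℤ/2ℤ)^{s−1}. -/
open scoped BigOperators

section Setup

variable (n s t : ℕ) [NeZero n]

/-- The vertex set: `Sum.inl (j,i)` is `z_i^j`, `Sum.inr (Sum.inl (j,i))` is `x_i^j`,
`Sum.inr (Sum.inr (j,i))` is `y_i^j`. -/
abbrev Vrt := (Fin s × ZMod n) ⊕ ((Fin t × ZMod n) ⊕ (Fin t × ZMod n))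

def zv (j : Fin s) (i : ZMod n) : Vrt n s t := Sum.inl (j, i)
def xv (j : Fin t) (i : ZMod n) : Vrt n s t := Sum.inr (Sum.inl (j, i))
def yv (j : Fin t) (i : ZMod n) : Vrt n s t := Sum.inr (Sum.inr (j, i))

/-- The involution σ₁. -/
def sig1 : Vrt n s t → Vrt n s t
  | Sum.inl (j, i) => Sum.inl (j, 1 - i)
  | Sum.inr (Sum.inl (j, i)) => Sum.inr (Sum.inr (j, 1 - i))
  | Sum.inr (Sum.inr (j, i)) => Sum.inr (Sum.inl (j, 1 - i))

/-- The involution σ₂. -/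
def sig2 : Vrt n s t → Vrt n s t
  | Sum.inl (j, i) => Sum.inl (j, 2 - i)
  | Sum.inr (Sum.inl (j, i)) => Sum.inr (Sum.inr (j, 2 - i))
  | Sum.inr (Sum.inr (j, i)) => Sum.inr (Sum.inl (j, 2 - i))

/-- The rotation ρ = σ₂ ∘ σ₁. -/
def rho : Vrt n s t → Vrt n s t := sig2 n s t ∘ sig1 n s t

/-- The index of a vertex, an element of ℤ/nℤ. -/
def idx : Vrt n s t → ZMod n
  | Sum.inl (_, i) => i
  | Sum.inr (Sum.inl (_, i)) => i
  | Sum.inr (Sum.inr (_, i)) => i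

/-- The group 𝒟 of divisors of total degree zero. -/
def DivD : AddSubgroup (Vrt n s t → ℤ) where
  carrier := {δ | ∑ v, δ v = 0}
  zero_mem' := by simp
  add_mem' := by
    intro a b ha hb
    simp only [Set.mem_setOf_eq, Pi.add_apply, Finset.sum_add_distrib] at *
    simp [ha, hb]
  neg_mem' := by
    intro a ha
    simp only [Set.mem_setOf_eq, Pi.neg_apply, Finset.sum_neg_distrib] at *
    simp [ha]

/-- 𝒫₁ : degree-zero divisors invariant under σ₁ with even values at σ₁-fixed vertices. -/
def Pgp1 : AddSubgroup (Vrt n s t → ℤ) where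
  carrier := {δ | (∑ v, δ v = 0) ∧ (∀ v, δ (sig1 n s t v) = δ v) ∧
      ∀ v, sig1 n s t v = v → Even (δ v)}
  zero_mem' := ⟨by simp, fun _ => rfl, fun _ _ => Even.zero⟩
  add_mem' := by
    rintro a b ⟨ha0, ha1, ha2⟩ ⟨hb0, hb1, hb2⟩
    refine ⟨?_, fun v => by simp [ha1 v, hb1 v], fun v hv => (ha2 v hv).add (hb2 v hv)⟩
    simp [Finset.sum_add_distrib, ha0, hb0]
  neg_mem' := by
    rintro a ⟨ha0, ha1, ha2⟩
    exact ⟨by simp [Finset.sum_neg_distrib, ha0], fun v => by simp [ha1 v],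
      fun v hv => (ha2 v hv).neg⟩

/-- 𝒫₂ : degree-zero divisors invariant under σ₂ with even values at σ₂-fixed vertices. -/
def Pgp2 : AddSubgroup (Vrt n s t → ℤ) where
  carrier := {δ | (∑ v, δ v = 0) ∧ (∀ v, δ (sig2 n s t v) = δ v) ∧
      ∀ v, sig2 n s t v = v → Even (δ v)}
  zero_mem' := ⟨by simp, fun _ => rfl, fun _ _ => Even.zero⟩
  add_mem' := by
    rintro a b ⟨ha0, ha1, ha2⟩ ⟨hb0, hb1, hb2⟩
    refine ⟨?_, fun v => by simp [ha1 v, hb1 v], fun v hv => (ha2 v hv).add (hb2 v hv)⟩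
    simp [Finset.sum_add_distrib, ha0, hb0]
  neg_mem' := by
    rintro a ⟨ha0, ha1, ha2⟩
    exact ⟨by simp [Finset.sum_neg_distrib, ha0], fun v => by simp [ha1 v],
      fun v hv => (ha2 v hv).neg⟩

/-- 𝒫₃ : degree-zero divisors invariant under ρ. -/
def Pgp3 : AddSubgroup (Vrt n s t → ℤ) where
  carrier := {δ | (∑ v, δ v = 0) ∧ ∀ v, δ (rho n s t v) = δ v}
  zero_mem' := ⟨by simp, fun _ => rfl⟩
  add_mem' := by
    rintro a b ⟨ha0, ha1⟩ ⟨hb0, hb1⟩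
    exact ⟨by simp [Finset.sum_add_distrib, ha0, hb0], fun v => by simp [ha1 v, hb1 v]⟩
  neg_mem' := by
    rintro a ⟨ha0, ha1⟩
    exact ⟨by simp [Finset.sum_neg_distrib, ha0], fun v => by simp [ha1 v]⟩

/-- 𝒫₀ : degree-zero divisors constant on each D_n-orbit with even values at the z-vertices
(the pullbacks of degree-zero divisors on G/D_n). -/
def Pgp0 : AddSubgroup (Vrt n s t → ℤ) where
  carrier := {δ | (∑ v, δ v = 0) ∧
      (∀ j i₁ i₂, δ (zv n s t j i₁) = δ (zv n s t j i₂)) ∧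
      (∀ j i₁ i₂, δ (xv n s t j i₁) = δ (xv n s t j i₂)) ∧
      (∀ j i₁ i₂, δ (xv n s t j i₁) = δ (yv n s t j i₂)) ∧
      ∀ j i, Even (δ (zv n s t j i))}
  zero_mem' := ⟨by simp, fun _ _ _ => rfl, fun _ _ _ => rfl, fun _ _ _ => rfl,
    fun _ _ => Even.zero⟩
  add_mem' := by
    rintro a b ⟨ha0, ha1, ha2, ha3, ha4⟩ ⟨hb0, hb1, hb2, hb3, hb4⟩
    exact ⟨by simp [Finset.sum_add_distrib, ha0, hb0],
      fun j i₁ i₂ => by simp [ha1 j i₁ i₂, hb1 j i₁ i₂],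
      fun j i₁ i₂ => by simp [ha2 j i₁ i₂, hb2 j i₁ i₂],
      fun j i₁ i₂ => by simp [ha3 j i₁ i₂, hb3 j i₁ i₂],
      fun j i => (ha4 j i).add (hb4 j i)⟩
  neg_mem' := by
    rintro a ⟨ha0, ha1, ha2, ha3, ha4⟩
    exact ⟨by simp [Finset.sum_neg_distrib, ha0],
      fun j i₁ i₂ => by simp [ha1 j i₁ i₂],
      fun j i₁ i₂ => by simp [ha2 j i₁ i₂],
      fun j i₁ i₂ => by simp [ha3 j i₁ i₂],
      fun j i => (ha4 j i).neg⟩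

/-- σ₁ as a permutation of the vertex set. -/
def sig1e : Equiv.Perm (Vrt n s t) where
  toFun := sig1 n s t
  invFun := sig1 n s t
  left_inv := by rintro (⟨j, i⟩ | ⟨j, i⟩ | ⟨j, i⟩) <;> simp [sig1, sub_sub_cancel]
  right_inv := by rintro (⟨j, i⟩ | ⟨j, i⟩ | ⟨j, i⟩) <;> simp [sig1, sub_sub_cancel]

/-- σ₂ as a permutation of the vertex set. -/
def sig2e : Equiv.Perm (Vrt n s t) where
  toFun := sig2 n s t
  invFun := sig2 n s t
  left_inv := by rintro (⟨j, i⟩ | ⟨j, i⟩ | ⟨j, i⟩) <;> simp [sig2, sub_sub_cancel]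
  right_inv := by rintro (⟨j, i⟩ | ⟨j, i⟩ | ⟨j, i⟩) <;> simp [sig2, sub_sub_cancel]

/-- The dihedral group D_n, realized as the subgroup of permutations of the vertex set
generated by σ₁ and σ₂. -/
def dihedral : Subgroup (Equiv.Perm (Vrt n s t)) :=
  Subgroup.closure {sig1e n s t, sig2e n s t}

/-- The multigraph with `w u v` edges between `u` and `v`, seen as a simple graph
recording adjacency. -/
def wGraph (w : Vrt n s t → Vrt n s t → ℕ) : SimpleGraph (Vrt n s t) where
  Adj u v := u ≠ v ∧ (w u v ≠ 0 ∨ w v u ≠ 0)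
  symm := ⟨by rintro u v ⟨h1, h2⟩; exact ⟨h1.symm, h2.symm⟩⟩
  loopless := ⟨by rintro v ⟨h, _⟩; exact h rfl⟩

/-- The firing divisor `L_v`. -/
def fire (w : Vrt n s t → Vrt n s t → ℕ) (v u : Vrt n s t) : ℤ :=
  if u = v then -(∑ x, (w v x : ℤ)) else (w u v : ℤ)

/-- The lattice ℒ generated by the firing divisors. -/
def FireLat (w : Vrt n s t → Vrt n s t → ℕ) : AddSubgroup (Vrt n s t → ℤ) :=
  AddSubgroup.closure (Set.range (fire n s t w))

/-- Harmonicity: no nontrivial element of D_n fixes both endpoints of an edge. -/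
def Harmonic (w : Vrt n s t → Vrt n s t → ℕ) : Prop :=
  ∀ g ∈ dihedral n s t, g ≠ 1 →
    ∀ u v : Vrt n s t, (wGraph n s t w).Adj u v → ¬(g u = u ∧ g v = v)

/-- The critical group K(G) = 𝒟/ℒ. -/
abbrev KGrp (w : Vrt n s t → Vrt n s t → ℕ) :=
  DivD n s t ⧸ ((FireLat n s t w).addSubgroupOf (DivD n s t))

/-- The image (𝒫 + ℒ)/ℒ of a subgroup 𝒫 of divisors in the critical group. -/
def Jsub (w : Vrt n s t → Vrt n s t → ℕ) (P : AddSubgroup (Vrt n s t → ℤ)) :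
    AddSubgroup (KGrp n s t w) :=
  ((P ⊔ FireLat n s t w).addSubgroupOf (DivD n s t)).map
    (QuotientAddGroup.mk' ((FireLat n s t w).addSubgroupOf (DivD n s t)))

/-- The sum map Φ : J₁ × J₂ × J₃ → K(G). -/
def Phi (w : Vrt n s t → Vrt n s t → ℕ) :
    (Jsub n s t w (Pgp1 n s t) × Jsub n s t w (Pgp2 n s t) × Jsub n s t w (Pgp3 n s t)) →+
      KGrp n s t w where
  toFun p := (p.1 : KGrp n s t w) + (p.2.1 : KGrp n s t w) + (p.2.2 : KGrp n s t w)
  map_zero' := by simp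
  map_add' := by
    intro a b
    simp only [Prod.fst_add, Prod.snd_add, AddSubgroup.coe_add]
    abel

/-- The subgroup ℒ′ of ℒ. -/
def FireLat' (w : Vrt n s t → Vrt n s t → ℕ) : AddSubgroup (Vrt n s t → ℤ) :=
  AddSubgroup.closure
    ({d | ∃ j i, d = fire n s t w (zv n s t j i)} ∪
     {d | ∃ j i₁ i₂, d = fire n s t w (xv n s t j i₁) + fire n s t w (yv n s t j i₂)} ∪
     {d | ∃ j, d = ∑ i, fire n s t w (xv n s t j i)} ∪
     {d | ∃ j, d = ∑ i, fire n s t w (yv n s t j i)})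

end Setup

/-!
The family `z⁰` serves as base. Three kinds of invariants of a divisor `δ` vanish on `𝒫`:
`∑ᵥ idx(v) δ(v)` and, for every `k`, `∑ᵢ (δ(yᵏᵢ) - δ(xᵏᵢ))` in `ℤ/nℤ`, and, for every `j ≠ 0`,
`∑ᵢ δ(zʲᵢ)` in `ℤ/2ℤ`. Each is `∑ᵥ δ(v) • Ω(v)` for a weight `Ω` with `Ω ∘ σ + Ω` constant, and
such a sum vanishes on `σ`-invariant divisors of degree zero that are even at the fixed points:
for `σ₂` the constant is twice another, and `σ₁` has no fixed points when `n` is even, so a parity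
transversal absorbs it. On `𝒫₃` it vanishes because every `ρ`-orbit carries the same total weight.

Conversely, modulo `𝒫` the step `[ρ v] - [v]` does not depend on `v` (it is a difference of a
`σ₂`-pair and a `σ₁`-pair), so all classes `[v] - [z⁰₀]` are integer combinations of those of
`z⁰₁`, the `yᵏ₀` and the `zʲ₀`. Orbit sums in `𝒫₃` make the first ones `n`-torsion and the
`σ₂`-fixed vertices `zʲ₁` make the last ones `2`-torsion, which matches the invariants exactly.
-/

open Finset

section Involution

variable {V M : Type*} [Fintype V] [AddCommGroup M] {σ : V → V}

theorem sum_zsmul_eq_zero_of_apply_eq_neg (hσ : Function.Involutive σ) {Ω : V → M}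
    (hΩ : ∀ v, Ω (σ v) = -Ω v) {δ : V → ℤ} (hδ : ∀ v, δ (σ v) = δ v)
    (hfix : ∀ v, σ v = v → Even (δ v)) : ∑ v, δ v • Ω v = 0 := by
  refine sum_ninvolution σ (fun v => by rw [hδ, hΩ, smul_neg, add_neg_cancel]) ?_
    (fun _ => mem_univ _) hσ
  intro v hv hfixed
  obtain ⟨m, hm⟩ := hfix v hfixed
  have h2 : Ω v + Ω v = 0 := by rw [← neg_eq_iff_add_eq_zero, ← hΩ, hfixed]
  exact hv (by rw [hm, add_zsmul, ← zsmul_add, h2, smul_zero])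

theorem sum_zsmul_eq_zero_of_apply_add_eq_two_nsmul (hσ : Function.Involutive σ) {Ω : V → M}
    {q : M} (hΩ : ∀ v, Ω (σ v) + Ω v = 2 • q) {δ : V → ℤ} (h0 : ∑ v, δ v = 0)
    (hδ : ∀ v, δ (σ v) = δ v) (hfix : ∀ v, σ v = v → Even (δ v)) :
    ∑ v, δ v • Ω v = 0 := by
  have hshift : ∑ v, δ v • (Ω v - q) = 0 :=
    sum_zsmul_eq_zero_of_apply_eq_neg hσ (fun v => by
      rw [neg_sub, sub_eq_sub_iff_add_eq_add, hΩ, two_nsmul]) hδ hfix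
  simpa [smul_sub, sum_sub_distrib, ← sum_smul, h0] using hshift

theorem sum_mul_eq_zero_of_add_apply_eq_one (hσ : Function.Involutive σ) {χ : V → ℤ}
    (hχ : ∀ v, χ v + χ (σ v) = 1) {δ : V → ℤ} (h0 : ∑ v, δ v = 0)
    (hδ : ∀ v, δ (σ v) = δ v) : ∑ v, χ v * δ v = 0 := by
  have hswap : ∑ v, χ (σ v) * δ v = ∑ v, χ v * δ v := by
    rw [← hσ.bijective.sum_comp (fun v => χ v * δ v)]
    simp only [hδ]
  have h2 : 2 * ∑ v, χ v * δ v = 0 := by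
    rw [two_mul]
    nth_rewrite 2 [← hswap]
    rw [← sum_add_distrib]
    simp only [← add_mul, hχ, one_mul, h0]
  omega

theorem sum_zsmul_eq_zero_of_apply_add_eq (hσ : Function.Involutive σ) {Ω : V → M} {c : M}
    (hΩ : ∀ v, Ω (σ v) + Ω v = c) {χ : V → ℤ} (hχ : ∀ v, χ v + χ (σ v) = 1) {δ : V → ℤ}
    (h0 : ∑ v, δ v = 0) (hδ : ∀ v, δ (σ v) = δ v) : ∑ v, δ v • Ω v = 0 := by
  have hshift : ∑ v, δ v • (Ω v - χ v • c) = 0 := by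
    refine sum_zsmul_eq_zero_of_apply_eq_neg hσ (fun v => ?_) hδ (fun v hv => ?_)
    · rw [neg_sub, sub_eq_sub_iff_add_eq_add, hΩ, ← add_zsmul, hχ, one_zsmul]
    · have := hχ v
      rw [hv] at this
      omega
  have hχδ := sum_mul_eq_zero_of_add_apply_eq_one hσ hχ h0 hδ
  simpa [smul_sub, sum_sub_distrib, smul_smul, ← sum_smul, mul_comm, hχδ] using hshift

theorem pair_conditions [DecidableEq V] (hσ : Function.Involutive σ) (a b : V) :
    let δ : V → ℤ := Pi.single a 1 + Pi.single (σ a) 1 - Pi.single b 1 - Pi.single (σ b) 1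
    (∑ v, δ v = 0) ∧ (∀ v, δ (σ v) = δ v) ∧ ∀ v, σ v = v → Even (δ v) := by
  intro δ
  have hsingle : ∀ x v, (Pi.single x 1 : V → ℤ) (σ v) = (Pi.single (σ x) 1 : V → ℤ) v :=
    fun x v => by simp only [Pi.single_apply, ← hσ.eq_iff]
  refine ⟨by simp [δ, sum_sub_distrib, sum_add_distrib], fun v => ?_, fun v hv => ?_⟩
  · simp only [δ, Pi.sub_apply, Pi.add_apply, hsingle, hσ a, hσ b]
    ring
  · have key : ∀ x, Even ((Pi.single x 1 : V → ℤ) v + (Pi.single (σ x) 1 : V → ℤ) v) :=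
      fun x => by
        nth_rewrite 1 [← hv]
        rw [hsingle]
        exact ⟨_, rfl⟩
    simpa [δ, sub_sub, ← add_sub_assoc, add_comm] using (key a).sub (key b)

end Involution

theorem nonempty_quotient_addEquiv_of_lift {G B Q : Type*} [AddCommGroup G] [AddCommGroup B]
    [AddCommGroup Q] {D P : AddSubgroup G} (Φ : G →+ Q) (ψ : B →+ G) (hψD : ∀ b, ψ b ∈ D)
    (hΦP : ∀ p ∈ P, Φ p = 0) (hspan : ∀ d ∈ D, ∃ b, d - ψ b ∈ P)
    (hker : ∀ b, Φ (ψ b) = 0 → ψ b ∈ P) (hsurj : Function.Surjective (Φ.comp ψ)) :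
    Nonempty (D ⧸ P.addSubgroupOf D ≃+ Q) := by
  have hker' : P.addSubgroupOf D = (Φ.comp D.subtype).ker := by
    ext ⟨d, hd⟩
    rw [AddSubgroup.mem_addSubgroupOf, AddMonoidHom.mem_ker, AddMonoidHom.comp_apply,
      AddSubgroup.subtype_apply]
    refine ⟨hΦP d, fun hΦd => ?_⟩
    obtain ⟨b, hb⟩ := hspan d hd
    have hψ : Φ (ψ b) = 0 := by simpa [hΦd] using hΦP _ hb
    simpa using add_mem hb (hker b hψ)
  have hsurj' : Function.Surjective (Φ.comp D.subtype) := fun q =>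
    let ⟨b, hb⟩ := hsurj q
    ⟨⟨ψ b, hψD b⟩, hb⟩
  exact ⟨(QuotientAddGroup.quotientAddEquivOfEq hker').trans
    (QuotientAddGroup.quotientKerEquivOfSurjective _ hsurj')⟩

theorem ZMod.add_one_induction {n : ℕ} [NeZero n] {p : ZMod n → Prop} (h0 : p 0)
    (hstep : ∀ i, p i → p (i + 1)) (i : ZMod n) : p i := by
  rw [← ZMod.natCast_zmod_val i]
  induction i.val with
  | zero => simpa using h0
  | succ m ih => simpa using hstep _ ih

namespace DihedralQuotient

variable {n s t : ℕ}

theorem sig1_involutive : Function.Involutive (sig1 n s t) := (sig1e n s t).left_inv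

theorem sig2_involutive : Function.Involutive (sig2 n s t) := (sig2e n s t).left_inv

/-- The `ρ`-orbits: `z^j`, `x^k` and `y^k`. -/
abbrev Fam (s t : ℕ) := Fin s ⊕ (Fin t ⊕ Fin t)

variable (n s t) in
def vtx : Fam s t × ZMod n ≃ Vrt n s t :=
  (Equiv.sumProdDistrib _ _ _).trans (Equiv.sumCongr (Equiv.refl _) (Equiv.sumProdDistrib _ _ _))

theorem rho_vtx (a : Fam s t) (i : ZMod n) :
    rho n s t (vtx n s t (a, i)) = vtx n s t (a, i + 1) := by
  have h : (2 : ZMod n) - (1 - i) = i + 1 := by ring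
  rcases a with j | k | k <;> simp [rho, vtx, sig1, sig2, h]

section Quotient

variable [NeZero n]

theorem apply_vtx_eq_of_rho_invariant {δ : Vrt n s t → ℤ} (hρ : ∀ v, δ (rho n s t v) = δ v)
    (a : Fam s t) (i : ZMod n) : δ (vtx n s t (a, i)) = δ (vtx n s t (a, 0)) := by
  induction i using ZMod.add_one_induction with
  | h0 => rfl
  | hstep i ih => rw [← rho_vtx, hρ, ih]

theorem sum_zsmul_eq_zero_of_mem_Pgp3 {M : Type*} [AddCommGroup M] {Ω : Vrt n s t → M} {c : M}
    (hΩ : ∀ a, ∑ i, Ω (vtx n s t (a, i)) = c) {δ : Vrt n s t → ℤ} (hδ : δ ∈ Pgp3 n s t) :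
    ∑ v, δ v • Ω v = 0 := by
  obtain ⟨h0, hρ⟩ := hδ
  have hfam : ∑ a, δ (vtx n s t (a, 0)) = 0 := by
    rw [← (vtx n s t).sum_comp, Fintype.sum_prod_type] at h0
    simp only [apply_vtx_eq_of_rho_invariant hρ, sum_const, card_univ, ZMod.card, nsmul_eq_mul,
      ← mul_sum] at h0
    exact (mul_eq_zero.mp h0).resolve_left (Nat.cast_ne_zero.mpr (NeZero.ne n))
  rw [← (vtx n s t).sum_comp, Fintype.sum_prod_type]
  simp only [apply_vtx_eq_of_rho_invariant hρ, ← smul_sum, hΩ, ← sum_smul, hfam, zero_smul]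

variable (n s t) in
abbrev Pgp : AddSubgroup (Vrt n s t → ℤ) := Pgp1 n s t ⊔ Pgp2 n s t ⊔ Pgp3 n s t

def cls (v : Vrt n s t) : (Vrt n s t → ℤ) ⧸ Pgp n s t := QuotientAddGroup.mk (Pi.single v 1)

theorem mk_eq_sum_zsmul_cls (δ : Vrt n s t → ℤ) :
    (δ : (Vrt n s t → ℤ) ⧸ Pgp n s t) = ∑ v, δ v • cls v := by
  conv_lhs => rw [pi_eq_sum_univ' δ]
  simp [cls]

theorem cls_add_cls_eq {σ : Vrt n s t → Vrt n s t}
    (hpair : ∀ a b, Pi.single a 1 + Pi.single (σ a) 1 - Pi.single b 1 - Pi.single (σ b) 1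
      ∈ Pgp n s t) (u v : Vrt n s t) : cls u + cls (σ u) = cls v + cls (σ v) := by
  have h := (QuotientAddGroup.eq_zero_iff _).mpr (hpair u v)
  simp only [QuotientAddGroup.mk_sub, QuotientAddGroup.mk_add] at h
  rw [← sub_eq_zero, ← h]
  simp only [cls]
  abel

theorem cls_add_cls_sig1 (u v : Vrt n s t) :
    cls u + cls (sig1 n s t u) = cls v + cls (sig1 n s t v) :=
  cls_add_cls_eq (fun a b => AddSubgroup.mem_sup_left <| AddSubgroup.mem_sup_left <|
    pair_conditions sig1_involutive a b) u v

theorem cls_add_cls_sig2 (u v : Vrt n s t) :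
    cls u + cls (sig2 n s t u) = cls v + cls (sig2 n s t v) :=
  cls_add_cls_eq (fun a b => AddSubgroup.mem_sup_left <| AddSubgroup.mem_sup_right <|
    pair_conditions sig2_involutive a b) u v

theorem cls_rho_sub_cls (u v : Vrt n s t) :
    cls (rho n s t u) - cls u = cls (rho n s t v) - cls v := by
  have h1 := cls_add_cls_sig1 u v
  have h2 := cls_add_cls_sig2 (sig1 n s t u) (sig1 n s t v)
  simp only [rho, Function.comp_apply]
  linear_combination (norm := abel) h2 - h1

theorem cls_sub_cls_shift (a b : Fam s t) (i j m : ZMod n) :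
    cls (vtx n s t (a, i + m)) - cls (vtx n s t (b, j + m)) =
      cls (vtx n s t (a, i)) - cls (vtx n s t (b, j)) := by
  induction m using ZMod.add_one_induction with
  | h0 => simp only [add_zero]
  | hstep m ih =>
    rw [← add_assoc, ← add_assoc, ← rho_vtx, ← rho_vtx, ← ih, sub_eq_sub_iff_sub_eq_sub,
      cls_rho_sub_cls]

variable (n) in
def famDiv (a : Fam s t) : Vrt n s t → ℤ := ∑ i, Pi.single (vtx n s t (a, i)) 1

theorem famDiv_vtx (a c : Fam s t) (j : ZMod n) :
    famDiv n a (vtx n s t (c, j)) = if c = a then 1 else 0 := by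
  by_cases h : c = a <;> simp [famDiv, Finset.sum_apply, Pi.single_apply, Prod.ext_iff, h]

theorem sum_famDiv (a : Fam s t) : ∑ v, famDiv n a v = n := by
  simp only [famDiv, Finset.sum_apply]
  rw [Finset.sum_comm]
  simp [ZMod.card]

theorem famDiv_sub_famDiv_mem (a b : Fam s t) : famDiv n a - famDiv n b ∈ Pgp3 n s t := by
  refine ⟨?_, fun v => ?_⟩
  · simp only [Pi.sub_apply, Finset.sum_sub_distrib, sum_famDiv, sub_self]
  · obtain ⟨⟨c, j⟩, rfl⟩ := (vtx n s t).surjective v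
    simp only [Pi.sub_apply, rho_vtx, famDiv_vtx]

theorem nsmul_cls_sub_cls (u v : Vrt n s t) : n • (cls u - cls v) = 0 := by
  obtain ⟨⟨a, i⟩, rfl⟩ := (vtx n s t).surjective u
  obtain ⟨⟨b, j⟩, rfl⟩ := (vtx n s t).surjective v
  have hmem := AddSubgroup.mem_sup_right (S := Pgp1 n s t ⊔ Pgp2 n s t)
    (famDiv_sub_famDiv_mem (n := n) a b)
  calc n • (cls (vtx n s t (a, i)) - cls (vtx n s t (b, j)))
      = ∑ m, (cls (vtx n s t (a, i + m)) - cls (vtx n s t (b, j + m))) := by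
        simp only [cls_sub_cls_shift, sum_const, card_univ, ZMod.card]
    _ = ∑ m, cls (vtx n s t (a, m)) - ∑ m, cls (vtx n s t (b, m)) := by
        rw [sum_sub_distrib]
        congr 1 <;> exact Fintype.sum_equiv (Equiv.addLeft _) _ _ (fun _ => rfl)
    _ = ((famDiv n a - famDiv n b : Vrt n s t → ℤ) : (Vrt n s t → ℤ) ⧸ Pgp n s t) := by
        simp [famDiv, cls]
    _ = 0 := (QuotientAddGroup.eq_zero_iff _).mpr hmem

theorem two_zsmul_cls_zv_sub_cls_zv (j j' : Fin s) :
    (2 : ℤ) • (cls (zv n s t j 0) - cls (zv n s t j' 0)) = 0 := by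
  have hfix : ∀ j, sig2 n s t (zv n s t j 1) = zv n s t j 1 := fun j => by
    simp [zv, sig2, show (2 : ZMod n) - 1 = 1 by ring]
  have hpair := cls_add_cls_sig2 (zv n s t j 1) (zv n s t j' 1)
  have hshift := cls_sub_cls_shift (t := t) (Sum.inl j) (Sum.inl j') (0 : ZMod n) 0 1
  rw [hfix, hfix] at hpair
  rw [zero_add] at hshift
  change cls (zv n s t j 1) - cls (zv n s t j' 1) = cls (zv n s t j 0) - cls (zv n s t j' 0)
    at hshift
  rw [← hshift, two_zsmul]
  linear_combination (norm := abel) hpair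

end Quotient

def parityChi (h : 2 ∣ n) : Vrt n s t → ℤ
  | Sum.inl (_, i) => (ZMod.castHom h (ZMod 2) i).val
  | Sum.inr (Sum.inl _) => 1
  | Sum.inr (Sum.inr _) => 0

theorem parityChi_add_parityChi_sig1 (h : 2 ∣ n) (v : Vrt n s t) :
    parityChi h v + parityChi h (sig1 n s t v) = 1 := by
  have key : ∀ p : ZMod 2, (p.val : ℤ) + ((1 - p).val : ℤ) = 1 := by decide
  rcases v with ⟨j, i⟩ | ⟨k, i⟩ | ⟨k, i⟩
  · simp only [parityChi, sig1, map_sub, map_one]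
    exact key _
  · rfl
  · rfl

abbrev Target (n s t : ℕ) := (Fin (t + 1) → ZMod n) × (Fin s → ZMod 2)

def zcoord (j : Fin (s + 1)) : Fin s → ZMod 2 := Fin.cases 0 (fun r => Pi.single r 1) j

/-- The image of the vertex divisor of `v` under the invariants, i.e. the class of `v - z⁰₀`. -/
def coord : Vrt n (s + 1) t → Target n s t
  | Sum.inl (j, i) => (Pi.single 0 i, zcoord j)
  | Sum.inr (Sum.inl (k, i)) => (Pi.single 0 i - Pi.single k.succ 1, 0)
  | Sum.inr (Sum.inr (k, i)) => (Pi.single 0 i + Pi.single k.succ 1, 0)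

theorem coord_sig1_add_coord (v : Vrt n (s + 1) t) :
    coord (sig1 n (s + 1) t v) + coord v = (Pi.single 0 1, 0) := by
  rcases v with ⟨j, i⟩ | ⟨k, i⟩ | ⟨k, i⟩
  · refine Prod.ext ?_ (funext fun r => CharTwo.add_self_eq_zero _)
    simp [coord, sig1, ← Pi.single_add]
  · simp only [coord, sig1, Prod.mk_add_mk, add_zero, Prod.mk.injEq, and_true]
    rw [add_add_sub_cancel, ← Pi.single_add, sub_add_cancel]
  · simp only [coord, sig1, Prod.mk_add_mk, add_zero, Prod.mk.injEq, and_true]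
    rw [sub_add_add_cancel, ← Pi.single_add, sub_add_cancel]

theorem coord_sig2_add_coord (v : Vrt n (s + 1) t) :
    coord (sig2 n (s + 1) t v) + coord v = 2 • ((Pi.single 0 1, 0) : Target n s t) := by
  rw [show 2 • ((Pi.single 0 1, 0) : Target n s t) = (Pi.single 0 2, 0) by
    simp [← Pi.single_smul]]
  rcases v with ⟨j, i⟩ | ⟨k, i⟩ | ⟨k, i⟩
  · refine Prod.ext ?_ (funext fun r => CharTwo.add_self_eq_zero _)
    simp [coord, sig2, ← Pi.single_add]
  · simp only [coord, sig2, Prod.mk_add_mk, add_zero, Prod.mk.injEq, and_true]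
    rw [add_add_sub_cancel, ← Pi.single_add, sub_add_cancel]
  · simp only [coord, sig2, Prod.mk_add_mk, add_zero, Prod.mk.injEq, and_true]
    rw [sub_add_add_cancel, ← Pi.single_add, sub_add_cancel]

variable (n s t) in
def baseVtx : Vrt n (s + 1) t := zv n (s + 1) t 0 0

def baseDiff (v : Vrt n (s + 1) t) : Vrt n (s + 1) t → ℤ :=
  Pi.single v 1 - Pi.single (baseVtx n s t) 1

def genVtxA : Fin (t + 1) → Vrt n (s + 1) t :=
  Fin.cases (zv n (s + 1) t 0 1) (fun k => yv n (s + 1) t k 0)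

def genVtxB (r : Fin s) : Vrt n (s + 1) t := zv n (s + 1) t r.succ 0

variable (n s t) in
def lift : (Fin (t + 1) → ℤ) × (Fin s → ℤ) →+ (Vrt n (s + 1) t → ℤ) :=
  (Fintype.linearCombination ℤ (fun r => baseDiff (genVtxA r))).toAddMonoidHom.comp
      (AddMonoidHom.fst _ _) +
    (Fintype.linearCombination ℤ (fun r => baseDiff (genVtxB r))).toAddMonoidHom.comp
      (AddMonoidHom.snd _ _)

theorem lift_apply (x : (Fin (t + 1) → ℤ) × (Fin s → ℤ)) :
    lift n s t x = ∑ r, x.1 r • baseDiff (genVtxA r) + ∑ r, x.2 r • baseDiff (genVtxB r) := rfl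

section Coordinates

variable [NeZero n]

theorem sum_coord_vtx (h : 2 ∣ n) (a : Fam (s + 1) t) :
    ∑ i, coord (vtx n (s + 1) t (a, i)) = (Pi.single 0 (∑ i : ZMod n, i), 0) := by
  have hsingle : ∑ i : ZMod n, (Pi.single 0 i : Fin (t + 1) → ZMod n) = Pi.single 0 (∑ i, i) :=
    (map_sum (AddMonoidHom.single (fun _ => ZMod n) 0) _ _).symm
  rcases a with j | k | k <;> refine Prod.ext ?_ ?_ <;>
    simp [coord, vtx, Prod.fst_sum, Prod.snd_sum, sum_sub_distrib, sum_add_distrib, ZMod.card,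
      hsingle]
  ext r
  simp [(ZMod.natCast_eq_zero_iff n 2).mpr h]

variable (n s t) in
def coordMap : (Vrt n (s + 1) t → ℤ) →+ Target n s t :=
  (Fintype.linearCombination ℤ coord).toAddMonoidHom

theorem coordMap_apply (δ : Vrt n (s + 1) t → ℤ) : coordMap n s t δ = ∑ v, δ v • coord v := rfl

theorem coordMap_eq_zero_of_mem_Pgp (h : 2 ∣ n) {δ : Vrt n (s + 1) t → ℤ}
    (hδ : δ ∈ Pgp n (s + 1) t) : coordMap n s t δ = 0 := by
  suffices Pgp n (s + 1) t ≤ (coordMap n s t).ker from this hδ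
  refine sup_le (sup_le (fun δ hδ => ?_) (fun δ hδ => ?_)) (fun δ hδ => ?_) <;>
    rw [AddMonoidHom.mem_ker, coordMap_apply]
  · obtain ⟨h0, hσ, -⟩ := hδ
    exact sum_zsmul_eq_zero_of_apply_add_eq sig1_involutive coord_sig1_add_coord
      (parityChi_add_parityChi_sig1 h) h0 hσ
  · obtain ⟨h0, hσ, hfix⟩ := hδ
    exact sum_zsmul_eq_zero_of_apply_add_eq_two_nsmul sig2_involutive coord_sig2_add_coord h0
      hσ hfix
  · exact sum_zsmul_eq_zero_of_mem_Pgp3 (sum_coord_vtx h) hδ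

theorem coordMap_baseDiff (v : Vrt n (s + 1) t) : coordMap n s t (baseDiff v) = coord v := by
  have : coord (baseVtx n s t) = 0 := by simp [baseVtx, zv, coord, zcoord]
  simp [baseDiff, coordMap, this]

theorem coordMap_lift (x : (Fin (t + 1) → ℤ) × (Fin s → ℤ)) :
    coordMap n s t (lift n s t x) = (fun r => (x.1 r : ZMod n), fun r => (x.2 r : ZMod 2)) := by
  have hA : ∀ r : Fin (t + 1), coord (genVtxA (n := n) (s := s) r) = (Pi.single r 1, 0) :=
    fun r => Fin.cases (by simp [genVtxA, coord, zv, zcoord])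
      (fun k => by simp [genVtxA, coord, yv]) r
  have hB : ∀ r : Fin s, coord (genVtxB (n := n) (t := t) r) = (0, Pi.single r 1) := fun r => by
    simp [genVtxB, coord, zv, zcoord]
  rw [lift_apply, map_add, map_sum, map_sum]
  simp only [map_zsmul, coordMap_baseDiff, hA, hB]
  ext r <;> simp [Prod.fst_sum, Prod.snd_sum, Pi.single_apply]

theorem coordMap_comp_lift_surjective :
    Function.Surjective ((coordMap n s t).comp (lift n s t)) := fun q =>
  ⟨(fun r => (q.1 r).val, fun r => (q.2 r).val), by simp [coordMap_lift]⟩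

theorem lift_mem_DivD (x : (Fin (t + 1) → ℤ) × (Fin s → ℤ)) :
    lift n s t x ∈ DivD n (s + 1) t := by
  have h : ∀ v, baseDiff v ∈ DivD n (s + 1) t := fun v => by
    change ∑ w, baseDiff v w = 0
    simp only [baseDiff, Pi.sub_apply, sum_sub_distrib, sum_pi_single', mem_univ, if_true,
      sub_self]
  rw [lift_apply]
  exact add_mem (sum_mem fun r _ => zsmul_mem (h _) _) (sum_mem fun r _ => zsmul_mem (h _) _)

theorem mk_baseDiff (v : Vrt n (s + 1) t) :
    (baseDiff v : (Vrt n (s + 1) t → ℤ) ⧸ Pgp n (s + 1) t) = cls v - cls (baseVtx n s t) := rfl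

theorem lift_mem_Pgp_of_coordMap_eq_zero (x : (Fin (t + 1) → ℤ) × (Fin s → ℤ))
    (hx : coordMap n s t (lift n s t x) = 0) : lift n s t x ∈ Pgp n (s + 1) t := by
  simp only [coordMap_lift, Prod.mk_eq_zero, funext_iff, Pi.zero_apply,
    ZMod.intCast_zmod_eq_zero_iff_dvd] at hx
  rw [← QuotientAddGroup.eq_zero_iff, lift_apply]
  simp only [QuotientAddGroup.mk_add, QuotientAddGroup.mk_sum, QuotientAddGroup.mk_zsmul,
    mk_baseDiff]
  have hA : ∀ r, x.1 r • (cls (genVtxA r) - cls (baseVtx n s t)) = 0 := fun r => by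
    obtain ⟨c, hc⟩ := hx.1 r
    rw [hc, mul_comm, mul_zsmul, natCast_zsmul, nsmul_cls_sub_cls, zsmul_zero]
  have hB : ∀ r, x.2 r • (cls (genVtxB r) - cls (baseVtx n s t)) = 0 := fun r => by
    obtain ⟨c, hc⟩ := hx.2 r
    have h2 : (2 : ℤ) • (cls (genVtxB r) - cls (baseVtx n s t)) = 0 :=
      two_zsmul_cls_zv_sub_cls_zv _ _
    rw [hc, mul_comm, mul_zsmul, Nat.cast_ofNat, h2, zsmul_zero]
  simp [hA, hB]

variable (n s t) in
abbrev liftRange : AddSubgroup ((Vrt n (s + 1) t → ℤ) ⧸ Pgp n (s + 1) t) :=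
  ((QuotientAddGroup.mk' (Pgp n (s + 1) t)).comp (lift n s t)).range

theorem cls_genVtxA_sub_mem (r : Fin (t + 1)) :
    cls (genVtxA (n := n) (s := s) r) - cls (baseVtx n s t) ∈ liftRange n s t :=
  ⟨(Pi.single r 1, 0), by simp [lift_apply, mk_baseDiff]⟩

theorem cls_genVtxB_sub_mem (r : Fin s) :
    cls (genVtxB (n := n) (t := t) r) - cls (baseVtx n s t) ∈ liftRange n s t :=
  ⟨(0, Pi.single r 1), by simp [lift_apply, mk_baseDiff]⟩

theorem cls_rho_sub_mem {v : Vrt n (s + 1) t} (hv : cls v - cls (baseVtx n s t) ∈ liftRange n s t) :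
    cls (rho n (s + 1) t v) - cls (baseVtx n s t) ∈ liftRange n s t := by
  have hstep := cls_rho_sub_cls v (baseVtx n s t)
  have hbase : rho n (s + 1) t (baseVtx n s t) = genVtxA 0 := by
    rw [show baseVtx n s t = vtx n (s + 1) t (Sum.inl 0, 0) from rfl, rho_vtx, zero_add]
    rfl
  rw [hbase] at hstep
  rw [show cls (rho n (s + 1) t v) - cls (baseVtx n s t) =
      (cls v - cls (baseVtx n s t)) + (cls (genVtxA 0) - cls (baseVtx n s t)) by
    linear_combination (norm := abel) hstep]
  exact add_mem hv (cls_genVtxA_sub_mem 0)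

theorem cls_vtx_sub_mem {a : Fam (s + 1) t}
    (h0 : cls (vtx n (s + 1) t (a, 0)) - cls (baseVtx n s t) ∈ liftRange n s t) (i : ZMod n) :
    cls (vtx n (s + 1) t (a, i)) - cls (baseVtx n s t) ∈ liftRange n s t := by
  induction i using ZMod.add_one_induction with
  | h0 => exact h0
  | hstep i ih => rw [← rho_vtx]; exact cls_rho_sub_mem ih

theorem cls_sub_cls_baseVtx_mem (v : Vrt n (s + 1) t) :
    cls v - cls (baseVtx n s t) ∈ liftRange n s t := by
  obtain ⟨⟨a, i⟩, rfl⟩ := (vtx n (s + 1) t).surjective v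
  refine cls_vtx_sub_mem ?_ i
  rcases a with j | k | k
  · refine Fin.cases ?_ cls_genVtxB_sub_mem j
    exact (sub_self (cls (baseVtx n s t))).symm ▸ zero_mem _
  · have hy : cls (yv n (s + 1) t k 1) - cls (baseVtx n s t) ∈ liftRange n s t :=
      cls_vtx_sub_mem (a := Sum.inr (Sum.inr k)) (cls_genVtxA_sub_mem k.succ) 1
    have hpair := cls_add_cls_sig1 (xv n (s + 1) t k 0) (baseVtx n s t)
    change cls (xv n (s + 1) t k 0) + cls (yv n (s + 1) t k (1 - 0)) =
      cls (baseVtx n s t) + cls (zv n (s + 1) t 0 (1 - 0)) at hpair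
    rw [sub_zero] at hpair
    change cls (xv n (s + 1) t k 0) - cls (baseVtx n s t) ∈ liftRange n s t
    rw [show cls (xv n (s + 1) t k 0) - cls (baseVtx n s t) =
        (cls (zv n (s + 1) t 0 1) - cls (baseVtx n s t)) -
          (cls (yv n (s + 1) t k 1) - cls (baseVtx n s t)) by
      linear_combination (norm := abel) hpair]
    exact sub_mem (cls_genVtxA_sub_mem 0) hy
  · exact cls_genVtxA_sub_mem k.succ

theorem exists_sub_lift_mem_Pgp {δ : Vrt n (s + 1) t → ℤ} (hδ : δ ∈ DivD n (s + 1) t) :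
    ∃ x, δ - lift n s t x ∈ Pgp n (s + 1) t := by
  have hsum : ∑ v, δ v = 0 := hδ
  have hmem : (δ : (Vrt n (s + 1) t → ℤ) ⧸ Pgp n (s + 1) t) ∈ liftRange n s t := by
    have h : (δ : (Vrt n (s + 1) t → ℤ) ⧸ Pgp n (s + 1) t) =
        ∑ v, δ v • (cls v - cls (baseVtx n s t)) := by
      rw [mk_eq_sum_zsmul_cls]
      simp only [zsmul_sub, sum_sub_distrib, ← sum_smul, hsum, zero_smul, sub_zero]
    rw [h]
    exact sum_mem fun v _ => zsmul_mem (cls_sub_cls_baseVtx_mem v) _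
  obtain ⟨x, hx⟩ := hmem
  exact ⟨x, QuotientAddGroup.eq_iff_sub_mem.mp hx.symm⟩

end Coordinates

end DihedralQuotient

theorem quot_D_P_of_even_general (n s t : ℕ) [NeZero n] (heven : Even n) (hs : 1 ≤ s) :
    Nonempty ((DivD n s t ⧸
        ((Pgp1 n s t ⊔ Pgp2 n s t ⊔ Pgp3 n s t).addSubgroupOf (DivD n s t))) ≃+
      ((Fin (t + 1) → ZMod n) × (Fin (s - 1) → ZMod 2))) := by
  obtain ⟨s, rfl⟩ : ∃ s', s = s' + 1 := ⟨s - 1, by omega⟩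
  rw [Nat.add_sub_cancel]
  open DihedralQuotient in
  exact nonempty_quotient_addEquiv_of_lift (coordMap n s t) (lift n s t) lift_mem_DivD
    (fun _ => coordMap_eq_zero_of_mem_Pgp heven.two_dvd) (fun _ => exists_sub_lift_mem_Pgp)
    lift_mem_Pgp_of_coordMap_eq_zero coordMap_comp_lift_surjective

/-- **𝒟/𝒫 for n even, s ≥ 1.** -/
theorem quot_D_P_of_even (n s t : ℕ) [NeZero n] (hn : 3 ≤ n) (heven : Even n) (hs : 1 ≤ s) :
    Nonempty ((DivD n s t ⧸
        ((Pgp1 n s t ⊔ Pgp2 n s t ⊔ Pgp3 n s t).addSubgroupOf (DivD n s t))) ≃+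
      ((Fin (t + 1) → ZMod n) × (Fin (s - 1) → ZMod 2))) :=
  quot_D_P_of_even_general n s t heven hs
end

section
/- A divisor δ ∈ 𝒟 lies in 𝒫₁ ∩ 𝒫₂ if and only if δ ∈ 𝒫₀, i.e. if and only if δ is constant on each D_n-orbit of V and δ(z_i^j) is even for all 1 ≤ j ≤ s and all i ∈ ℤ/nℤ. -/
open scoped BigOperators

section Setup

variable (n s t : ℕ) [NeZero n]

/-!
The rotation ρ = σ₂σ₁ shifts every index by one, so a divisor invariant under σ₁ and σ₂ is
constant along each of the families `z^j`, `x^j`, `y^j`, and σ₁ identifies the values on `x^j`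
with those on `y^j`. Since σ₂ fixes `z_1^j`, the parity condition of 𝒫₂ makes the common value
on the `z^j`-orbit even. Conversely, both σ₁ and σ₂ swap the `x`- and `y`-vertices, so all their
fixed vertices are `z`-vertices, where a divisor in 𝒫₀ is even.
-/

theorem ZMod.apply_eq_of_apply_add_one {n : ℕ} {α : Type*} {f : ZMod n → α}
    (h : ∀ i, f (i + 1) = f i) (i₁ i₂ : ZMod n) : f i₁ = f i₂ := by
  have h_int (k : ℤ) : f k = f 0 := by
    induction k using Int.induction_on with
    | zero => simp
    | succ k ih => rw [Int.cast_add, Int.cast_one, h, ih]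
    | pred k ih => rw [← ih, ← h, Int.cast_sub, Int.cast_one, sub_add_cancel]
  obtain ⟨k₁, rfl⟩ := ZMod.intCast_surjective i₁
  obtain ⟨k₂, rfl⟩ := ZMod.intCast_surjective i₂
  rw [h_int, h_int]

section Reflection

variable {n s t : ℕ}

def reflect (a : ZMod n) : Vrt n s t → Vrt n s t
  | Sum.inl (j, i) => Sum.inl (j, a - i)
  | Sum.inr (Sum.inl (j, i)) => Sum.inr (Sum.inr (j, a - i))
  | Sum.inr (Sum.inr (j, i)) => Sum.inr (Sum.inl (j, a - i))

@[simp]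
theorem reflect_zv (a : ZMod n) (j : Fin s) (i : ZMod n) :
    reflect a (zv n s t j i) = zv n s t j (a - i) :=
  rfl

@[simp]
theorem reflect_xv (a : ZMod n) (j : Fin t) (i : ZMod n) :
    reflect a (xv n s t j i) = yv n s t j (a - i) :=
  rfl

@[simp]
theorem reflect_yv (a : ZMod n) (j : Fin t) (i : ZMod n) :
    reflect a (yv n s t j i) = xv n s t j (a - i) :=
  rfl

theorem sig1_eq_reflect : sig1 n s t = reflect 1 := by
  funext v
  rcases v with ⟨j, i⟩ | ⟨j, i⟩ | ⟨j, i⟩ <;> rfl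

theorem sig2_eq_reflect : sig2 n s t = reflect 2 := by
  funext v
  rcases v with ⟨j, i⟩ | ⟨j, i⟩ | ⟨j, i⟩ <;> rfl

theorem exists_eq_zv_of_reflect_eq_self {a : ZMod n} {v : Vrt n s t} (hv : reflect a v = v) :
    ∃ j i, v = zv n s t j i := by
  rcases v with ⟨j, i⟩ | ⟨j, i⟩ | ⟨j, i⟩
  · exact ⟨j, i, rfl⟩
  · cases hv
  · cases hv

theorem reflect_add_one_reflect_zv (a : ZMod n) (j : Fin s) (i : ZMod n) :
    reflect (a + 1) (reflect a (zv n s t j i)) = zv n s t j (i + 1) := by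
  rw [reflect_zv, reflect_zv]
  ring_nf

theorem reflect_add_one_reflect_xv (a : ZMod n) (j : Fin t) (i : ZMod n) :
    reflect (a + 1) (reflect a (xv n s t j i)) = xv n s t j (i + 1) := by
  rw [reflect_xv, reflect_yv]
  ring_nf

section Invariant

variable {α : Type*} {f : Vrt n s t → α} {a : ZMod n}

theorem apply_zv_eq_of_reflect_invariant (h₁ : ∀ v, f (reflect a v) = f v)
    (h₂ : ∀ v, f (reflect (a + 1) v) = f v) (j : Fin s) (i₁ i₂ : ZMod n) :
    f (zv n s t j i₁) = f (zv n s t j i₂) :=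
  ZMod.apply_eq_of_apply_add_one (f := fun i => f (zv n s t j i))
    (fun i => by rw [← reflect_add_one_reflect_zv a, h₂, h₁]) i₁ i₂

theorem apply_xv_eq_of_reflect_invariant (h₁ : ∀ v, f (reflect a v) = f v)
    (h₂ : ∀ v, f (reflect (a + 1) v) = f v) (j : Fin t) (i₁ i₂ : ZMod n) :
    f (xv n s t j i₁) = f (xv n s t j i₂) :=
  ZMod.apply_eq_of_apply_add_one (f := fun i => f (xv n s t j i))
    (fun i => by rw [← reflect_add_one_reflect_xv a, h₂, h₁]) i₁ i₂

end Invariant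

def ReflectionInvariant (a : ZMod n) (δ : Vrt n s t → ℤ) : Prop :=
  (∀ v, δ (reflect a v) = δ v) ∧ ∀ v, reflect a v = v → Even (δ v)

theorem mem_Pgp1_iff [NeZero n] {δ : Vrt n s t → ℤ} :
    δ ∈ Pgp1 n s t ↔ ∑ v, δ v = 0 ∧ ReflectionInvariant 1 δ := by
  rw [ReflectionInvariant, ← sig1_eq_reflect]
  rfl

theorem mem_Pgp2_iff [NeZero n] {δ : Vrt n s t → ℤ} :
    δ ∈ Pgp2 n s t ↔ ∑ v, δ v = 0 ∧ ReflectionInvariant 2 δ := by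
  rw [ReflectionInvariant, ← sig2_eq_reflect]
  rfl

theorem reflectionInvariant_of_mem_Pgp0 [NeZero n] {δ : Vrt n s t → ℤ} (hδ : δ ∈ Pgp0 n s t)
    (a : ZMod n) : ReflectionInvariant a δ := by
  obtain ⟨-, hz, -, hxy, heven⟩ := hδ
  refine ⟨?_, fun v hv => ?_⟩
  · rintro (⟨j, i⟩ | ⟨j, i⟩ | ⟨j, i⟩)
    · exact hz j (a - i) i
    · exact (hxy j i (a - i)).symm
    · exact hxy j (a - i) i
  · obtain ⟨j, i, rfl⟩ := exists_eq_zv_of_reflect_eq_self hv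
    exact heven j i

end Reflection

theorem mem_P1_inf_P2_iff_general (n s t : ℕ) [NeZero n] (δ : Vrt n s t → ℤ) :
    δ ∈ Pgp1 n s t ⊓ Pgp2 n s t ↔ δ ∈ Pgp0 n s t := by
  rw [AddSubgroup.mem_inf, mem_Pgp1_iff, mem_Pgp2_iff]
  constructor
  · rintro ⟨⟨h0, h₁, -⟩, -, h₂, h₂even⟩
    rw [← one_add_one_eq_two] at h₂ h₂even
    have hz := apply_zv_eq_of_reflect_invariant h₁ h₂
    have hx := apply_xv_eq_of_reflect_invariant h₁ h₂
    refine ⟨h0, hz, hx, fun j i₁ i₂ => ?_, fun j i => ?_⟩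
    · rw [hx j i₁ (1 - i₂), ← h₁, reflect_xv, sub_sub_cancel]
    · rw [hz j i 1]
      exact h₂even _ (by rw [reflect_zv, add_sub_cancel_right])
  · intro hδ
    exact ⟨⟨hδ.1, reflectionInvariant_of_mem_Pgp0 hδ 1⟩,
      ⟨hδ.1, reflectionInvariant_of_mem_Pgp0 hδ 2⟩⟩

/-- **𝒫₁ ∩ 𝒫₂ = 𝒫₀.** -/
theorem mem_P1_inf_P2_iff (n s t : ℕ) [NeZero n] (hn : 3 ≤ n)
    (δ : Vrt n s t → ℤ) (hδ : δ ∈ DivD n s t) :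
    δ ∈ Pgp1 n s t ⊓ Pgp2 n s t ↔ δ ∈ Pgp0 n s t :=
  mem_P1_inf_P2_iff_general n s t δ
end Setup
end

section
/- The quotient group ℒ/ℒ′ is isomorphic to (ℤ/nℤ)^t. -/
open scoped BigOperators

/-!
Write `ℒ` as the range of `T = fireComb w : c ↦ ∑ v, c v • L_v` and let `φ = totalChargeMod` send
`c` to the classes mod `n` of its charges `∑ i, (c x_i^j - c y_i^j)`; `φ` is onto `(ℤ/nℤ)^t`, so it suffices that
`T⁻¹ ℒ′ = ker φ`. Modulo `ℒ′` every `L_{x_i^j}` equals `L_{x_0^j}`, every `L_{y_i^j}` equals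
`-L_{x_0^j}`, the `L_{z_i^j}` vanish and `n • L_{x_0^j}` vanishes, so `T (ker φ) ⊆ ℒ′`.
Conversely the generators of `ℒ′` are images of vectors in `ker φ`, and `T c = T c'` forces
`c - c'` to be constant (maximum principle on the connected graph), on which `φ` vanishes.
-/

open Finset

section FiringDivisor

variable {V : Type*} [Fintype V] [DecidableEq V] (w : V → V → ℕ)

def firingDivisor (v u : V) : ℤ :=
  if u = v then -(∑ x, (w v x : ℤ)) else w u v

variable {w}

lemma firingDivisor_apply (hdiag : ∀ v, w v v = 0) (v u : V) :
    firingDivisor w v u = w u v - if u = v then ∑ x, (w v x : ℤ) else 0 := by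
  unfold firingDivisor
  split_ifs with h
  · simp [h, hdiag]
  · simp

lemma sum_smul_firingDivisor_apply (hdiag : ∀ v, w v v = 0) (c : V → ℤ) (u : V) :
    (∑ v, c v • firingDivisor w v) u = ∑ v, (w u v : ℤ) * (c v - c u) := by
  simp only [Finset.sum_apply, Pi.smul_apply, smul_eq_mul, firingDivisor_apply hdiag, mul_sub,
    mul_ite, mul_zero, Finset.sum_sub_distrib, Finset.sum_ite_eq, Finset.mem_univ, if_true,
    Finset.mul_sum]
  simp only [mul_comm]

theorem eq_of_sum_smul_firingDivisor_eq_zero (hdiag : ∀ v, w v v = 0) {G : SimpleGraph V}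
    (hG : G.Connected) (hadj : ∀ u v, G.Adj u v → w u v ≠ 0) {c : V → ℤ}
    (hc : ∑ v, c v • firingDivisor w v = 0) (u v : V) : c u = c v := by
  have harmonic (u : V) : ∑ v, (w u v : ℤ) * (c v - c u) = 0 := by
    rw [← sum_smul_firingDivisor_apply hdiag, hc, Pi.zero_apply]
  have : Nonempty V := ⟨u⟩
  obtain ⟨m, hm⟩ := Finite.exists_max c
  have hstep (a b : V) (hab : G.Adj a b) (ha : c a = c m) : c b = c m := by
    have hle : ∀ x ∈ univ, (w a x : ℤ) * (c x - c a) ≤ 0 := fun x _ =>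
      mul_nonpos_of_nonneg_of_nonpos (by positivity) (by linarith [hm x])
    rcases mul_eq_zero.1 ((sum_eq_zero_iff_of_nonpos hle).1 (harmonic a) b (mem_univ b)) with h | h
    · exact absurd (by exact_mod_cast h) (hadj a b hab)
    · linarith
  have hwalk (a b : V) (p : G.Walk a b) (ha : c a = c m) : c b = c m := by
    induction p with
    | nil => exact ha
    | cons hab _ ih => exact ih (hstep _ _ hab ha)
  rw [hwalk m u (hG.preconnected m u).some rfl, hwalk m v (hG.preconnected m v).some rfl]

end FiringDivisor

theorem AddMonoidHom.nonempty_quotient_addEquiv_of_comap_eq_ker {A M Q : Type*} [AddCommGroup A]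
    [AddCommGroup M] [AddCommGroup Q] (T : A →+ M) (φ : A →+ Q) (hφ : Function.Surjective φ)
    {L' : AddSubgroup M} (h : L'.comap T = φ.ker) :
    Nonempty (T.range ⧸ L'.addSubgroupOf T.range ≃+ Q) := by
  let π : A →+ T.range ⧸ L'.addSubgroupOf T.range :=
    (QuotientAddGroup.mk' _).comp T.rangeRestrict
  have hπ : Function.Surjective π :=
    (QuotientAddGroup.mk'_surjective _).comp T.rangeRestrict_surjective
  have hker : π.ker = φ.ker := by
    rw [← h]
    ext a
    simp [π, AddSubgroup.mem_addSubgroupOf]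
  exact ⟨(QuotientAddGroup.quotientKerEquivOfSurjective π hπ).symm.trans
    ((QuotientAddGroup.quotientAddEquivOfEq hker).trans
      (QuotientAddGroup.quotientKerEquivOfSurjective φ hφ))⟩

section Charge

variable (n s t : ℕ) [NeZero n]

lemma sum_vrt {M : Type*} [AddCommMonoid M] (f : Vrt n s t → M) :
    ∑ v, f v = ∑ j, ∑ i, f (zv n s t j i) + ∑ j, ∑ i, (f (xv n s t j i) + f (yv n s t j i)) := by
  simp [Fintype.sum_sum_type, Fintype.sum_prod_type, sum_add_distrib, zv, xv, yv]

def charge : Vrt n s t → Fin t → ℤ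
  | Sum.inl _ => 0
  | Sum.inr (Sum.inl (j, _)) => Pi.single j 1
  | Sum.inr (Sum.inr (j, _)) => -Pi.single j 1

def totalCharge : (Vrt n s t → ℤ) →+ (Fin t → ℤ) :=
  (Fintype.linearCombination ℤ (charge n s t)).toAddMonoidHom

def totalChargeMod : (Vrt n s t → ℤ) →+ (Fin t → ZMod n) :=
  ((Int.castAddHom (ZMod n)).compLeft (Fin t)).comp (totalCharge n s t)

variable {n s t}

lemma totalCharge_single (v : Vrt n s t) (k : ℤ) :
    totalCharge n s t (Pi.single v k) = k • charge n s t v := by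
  simp [totalCharge]

lemma totalChargeMod_apply (c : Vrt n s t → ℤ) (j : Fin t) :
    totalChargeMod n s t c j = totalCharge n s t c j := rfl

lemma totalCharge_apply (c : Vrt n s t → ℤ) (j : Fin t) :
    totalCharge n s t c j = ∑ i, (c (xv n s t j i) - c (yv n s t j i)) := by
  simp only [totalCharge, LinearMap.toAddMonoidHom_coe, Fintype.linearCombination_apply,
    Fintype.sum_sum_type, Fintype.sum_prod_type, Finset.sum_apply, Finset.sum_sub_distrib]
  simp [charge, Pi.single_apply, xv, yv, sub_eq_add_neg]

lemma totalChargeMod_eq_zero_iff (c : Vrt n s t → ℤ) :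
    totalChargeMod n s t c = 0 ↔ ∀ j, (n : ℤ) ∣ totalCharge n s t c j := by
  simp only [funext_iff, totalChargeMod_apply, Pi.zero_apply, ZMod.intCast_zmod_eq_zero_iff_dvd]

lemma totalChargeMod_surjective : Function.Surjective (totalChargeMod n s t) := by
  intro f
  refine ⟨∑ j, Pi.single (xv n s t j 0) ((f j).cast : ℤ), ?_⟩
  rw [map_sum]
  conv_rhs => rw [← Finset.univ_sum_single f]
  refine Finset.sum_congr rfl fun j _ => ?_
  funext j'
  rw [totalChargeMod_apply, totalCharge_single]
  by_cases h : j' = j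
  · subst h; simp [charge, xv]
  · simp [charge, xv, h]

end Charge

section Lattice

variable {n s t : ℕ} [NeZero n] (w : Vrt n s t → Vrt n s t → ℕ)

def fireComb : (Vrt n s t → ℤ) →+ (Vrt n s t → ℤ) :=
  (Fintype.linearCombination ℤ (fire n s t w)).toAddMonoidHom

lemma fireComb_apply (c : Vrt n s t → ℤ) : fireComb w c = ∑ v, c v • fire n s t w v := rfl

lemma fire_eq_firingDivisor : fire n s t w = firingDivisor w := rfl

lemma fireComb_single (v : Vrt n s t) (k : ℤ) :
    fireComb w (Pi.single v k) = k • fire n s t w v := by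
  simp [fireComb]

lemma fireLat_eq_range : FireLat n s t w = (fireComb w).range := by
  rw [FireLat, fireComb, ← LinearMap.range_toAddSubgroup, Fintype.range_linearCombination,
    Submodule.span_int_eq_addSubgroupClosure]

lemma eq_of_fireComb_eq_zero (hsymm : ∀ u v, w u v = w v u) (hdiag : ∀ v, w v v = 0)
    (hconn : (wGraph n s t w).Connected) {c : Vrt n s t → ℤ} (hc : fireComb w c = 0)
    (u v : Vrt n s t) : c u = c v :=
  eq_of_sum_smul_firingDivisor_eq_zero hdiag hconn
    (fun a b hab => hab.2.elim id fun h => by rwa [hsymm])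
    (by rwa [fireComb_apply, fire_eq_firingDivisor] at hc) u v

lemma fire_zv_mem (j : Fin s) (i : ZMod n) : fire n s t w (zv n s t j i) ∈ FireLat' n s t w :=
  AddSubgroup.subset_closure (.inl (.inl (.inl ⟨j, i, rfl⟩)))

lemma fire_xv_add_fire_yv_mem (j : Fin t) (i₁ i₂ : ZMod n) :
    fire n s t w (xv n s t j i₁) + fire n s t w (yv n s t j i₂) ∈ FireLat' n s t w :=
  AddSubgroup.subset_closure (.inl (.inl (.inr ⟨j, i₁, i₂, rfl⟩)))

lemma sum_fire_xv_mem (j : Fin t) : ∑ i, fire n s t w (xv n s t j i) ∈ FireLat' n s t w :=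
  AddSubgroup.subset_closure (.inl (.inr ⟨j, rfl⟩))

lemma sum_fire_yv_mem (j : Fin t) : ∑ i, fire n s t w (yv n s t j i) ∈ FireLat' n s t w :=
  AddSubgroup.subset_closure (.inr ⟨j, rfl⟩)

lemma fireLat'_le_map_ker_totalChargeMod :
    FireLat' n s t w ≤ (totalChargeMod n s t).ker.map (fireComb w) := by
  rw [FireLat', AddSubgroup.closure_le]
  rintro d (((⟨j, i, rfl⟩ | ⟨j, i₁, i₂, rfl⟩) | ⟨j, rfl⟩) | ⟨j, rfl⟩)
  · refine ⟨Pi.single (zv n s t j i) 1, ?_, by simp [fireComb_single]⟩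
    rw [SetLike.mem_coe, AddMonoidHom.mem_ker, totalChargeMod_eq_zero_iff]
    simp [totalCharge_single, charge, zv]
  · refine ⟨Pi.single (xv n s t j i₁) 1 + Pi.single (yv n s t j i₂) 1, ?_,
      by simp [fireComb_single]⟩
    rw [SetLike.mem_coe, AddMonoidHom.mem_ker, totalChargeMod_eq_zero_iff]
    simp [totalCharge_single, charge, xv, yv]
  · refine ⟨∑ i, Pi.single (xv n s t j i) 1, ?_, by simp [fireComb_single]⟩
    rw [SetLike.mem_coe, AddMonoidHom.mem_ker, totalChargeMod_eq_zero_iff]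
    simp [totalCharge_single, charge, xv, Pi.single_apply]
    intro j'
    split_ifs <;> simp
  · refine ⟨∑ i, Pi.single (yv n s t j i) 1, ?_, by simp [fireComb_single]⟩
    rw [SetLike.mem_coe, AddMonoidHom.mem_ker, totalChargeMod_eq_zero_iff]
    simp [totalCharge_single, charge, yv, Pi.single_apply]
    intro j'
    split_ifs <;> simp

lemma totalChargeMod_eq_zero_of_fireComb_mem (hsymm : ∀ u v, w u v = w v u)
    (hdiag : ∀ v, w v v = 0) (hconn : (wGraph n s t w).Connected) {c : Vrt n s t → ℤ}
    (hc : fireComb w c ∈ FireLat' n s t w) : totalChargeMod n s t c = 0 := by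
  obtain ⟨c', hc', hcc'⟩ := fireLat'_le_map_ker_totalChargeMod w hc
  have hconst := eq_of_fireComb_eq_zero w hsymm hdiag hconn (c := c - c')
    (by rw [map_sub, hcc', sub_self])
  have htotal : totalCharge n s t (c - c') = 0 := funext fun j => by
    rw [totalCharge_apply, Pi.zero_apply]
    exact sum_eq_zero fun i _ => by rw [hconst (xv n s t j i) (yv n s t j i), sub_self]
  funext j
  rw [← sub_add_cancel c c', map_add, hc', add_zero, Pi.zero_apply, totalChargeMod_apply, htotal,
    Pi.zero_apply, Int.cast_zero]

section Quotient

open QuotientAddGroup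

lemma mk_fire_zv (j : Fin s) (i : ZMod n) :
    (fire n s t w (zv n s t j i) : _ ⧸ FireLat' n s t w) = 0 :=
  (eq_zero_iff _).2 (fire_zv_mem w j i)

lemma mk_fire_xv (j : Fin t) (i : ZMod n) :
    (fire n s t w (xv n s t j i) : _ ⧸ FireLat' n s t w) = fire n s t w (xv n s t j 0) := by
  rw [← sub_eq_zero, ← mk_sub, eq_zero_iff,
    ← add_sub_add_right_eq_sub _ _ (fire n s t w (yv n s t j 0))]
  exact sub_mem (fire_xv_add_fire_yv_mem w j i 0) (fire_xv_add_fire_yv_mem w j 0 0)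

lemma mk_fire_yv (j : Fin t) (i : ZMod n) :
    (fire n s t w (yv n s t j i) : _ ⧸ FireLat' n s t w) = -fire n s t w (xv n s t j 0) := by
  rw [eq_neg_iff_add_eq_zero, ← mk_add, eq_zero_iff, add_comm]
  exact fire_xv_add_fire_yv_mem w j 0 i

lemma natCast_zsmul_mk_fire_xv (j : Fin t) :
    (n : ℤ) • (fire n s t w (xv n s t j 0) : _ ⧸ FireLat' n s t w) = 0 := by
  have := (eq_zero_iff _).2 (sum_fire_xv_mem w j)
  rw [mk_sum] at this
  simpa [mk_fire_xv, ZMod.card] using this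

lemma mk_fireComb (c : Vrt n s t → ℤ) :
    (fireComb w c : _ ⧸ FireLat' n s t w) =
      ∑ j, totalCharge n s t c j • (fire n s t w (xv n s t j 0) : _ ⧸ FireLat' n s t w) := by
  rw [fireComb_apply, mk_sum, sum_vrt]
  simp only [mk_zsmul, mk_fire_zv, mk_fire_xv, mk_fire_yv, smul_zero, sum_const_zero, zero_add,
    totalCharge_apply]
  refine sum_congr rfl fun j _ => ?_
  -- the `ℤ`-action on this quotient is `zsmul`, invisible to `Finset.sum_smul`
  rw [sum_sub_distrib, sub_zsmul, sum_add_distrib, ← zmultiplesHom_apply, ← zmultiplesHom_apply,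
    map_sum, map_sum]
  simp only [zmultiplesHom_apply, zsmul_neg, sum_neg_distrib]

lemma fireComb_mem_of_totalChargeMod_eq_zero {c : Vrt n s t → ℤ}
    (hc : totalChargeMod n s t c = 0) : fireComb w c ∈ FireLat' n s t w := by
  rw [← QuotientAddGroup.eq_zero_iff, mk_fireComb]
  refine sum_eq_zero fun j _ => ?_
  obtain ⟨k, hk⟩ := (totalChargeMod_eq_zero_iff c).1 hc j
  rw [hk, mul_comm, mul_smul, natCast_zsmul_mk_fire_xv, smul_zero]

end Quotient

lemma comap_fireLat'_eq_ker_totalChargeMod (hsymm : ∀ u v, w u v = w v u)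
    (hdiag : ∀ v, w v v = 0) (hconn : (wGraph n s t w).Connected) :
    (FireLat' n s t w).comap (fireComb w) = (totalChargeMod n s t).ker := by
  ext c
  exact ⟨totalChargeMod_eq_zero_of_fireComb_mem w hsymm hdiag hconn,
    fireComb_mem_of_totalChargeMod_eq_zero w⟩

end Lattice

theorem lat_quot_lat'_general (n s t : ℕ) [NeZero n]
    (w : Vrt n s t → Vrt n s t → ℕ)
    (hsymm : ∀ u v, w u v = w v u) (hdiag : ∀ v, w v v = 0)
    (hconn : (wGraph n s t w).Connected) :
    Nonempty ((FireLat n s t w ⧸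
        ((FireLat' n s t w).addSubgroupOf (FireLat n s t w))) ≃+
      (Fin t → ZMod n)) := by
  rw [fireLat_eq_range]
  exact (fireComb w).nonempty_quotient_addEquiv_of_comap_eq_ker _ totalChargeMod_surjective
    (comap_fireLat'_eq_ker_totalChargeMod w hsymm hdiag hconn)

/-- **ℒ/ℒ′ ≅ (ℤ/nℤ)^t.** -/
theorem lat_quot_lat' (n s t : ℕ) [NeZero n] (hn : 3 ≤ n)
    (w : Vrt n s t → Vrt n s t → ℕ)
    (hsymm : ∀ u v, w u v = w v u) (hdiag : ∀ v, w v v = 0)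
    (hinv1 : ∀ u v, w (sig1 n s t u) (sig1 n s t v) = w u v)
    (hinv2 : ∀ u v, w (sig2 n s t u) (sig2 n s t v) = w u v)
    (hconn : (wGraph n s t w).Connected)
    (hharm : Harmonic n s t w) :
    Nonempty ((FireLat n s t w ⧸
        ((FireLat' n s t w).addSubgroupOf (FireLat n s t w))) ≃+
      (Fin t → ZMod n)) :=
  lat_quot_lat'_general n s t w hsymm hdiag hconn
end
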